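/- Under the hypotheses of the vectorial fundamental transformation (β satisfying Darboux; ξ_i solving the direct system; ξ*_i, H_i solving the adjoint system ∂H_j/∂u_i = β_{ij}H_i; Ω(ξ,ξ*) invertible with ∂Ω(ξ,ξ*)/∂u_i = ξ_i⊗ξ*_i; Ω(ξ,H) with ∂Ω(ξ,H)/∂u_i = ξ_i H_i), the transformed Lamé coefficients Ĥ_i := H_i − ξ*_i Ω(ξ,ξ*)^{-1} Ω(ξ,H) satisfy ∂Ĥ_j/∂u_i = β̂_{ij} Ĥ_i for i ≠ j, where β̂_{ij} := β_{ij} − ⟨ξ*_j, Ω(ξ,ξ*)^{-1} ξ_i⟩. -/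

import Mathlib

open scoped BigOperators

/-- Partial derivative of a scalar function on `ℝ^N` in the `i`-th coordinate direction. -/
noncomputable def pd {N : ℕ} (i : Fin N) (f : (Fin N → ℝ) → ℝ) (u : Fin N → ℝ) : ℝ :=
  fderiv ℝ f u (Pi.single i 1)


lemma pd_const {N : ℕ} (i : Fin N) (c : ℝ) (u : Fin N → ℝ) : pd i (fun _ => c) u = 0 := by
  simp [pd]

lemma pd_sub {N : ℕ} (i : Fin N) {f g : (Fin N → ℝ) → ℝ} {u : Fin N → ℝ}
    (hf : DifferentiableAt ℝ f u) (hg : DifferentiableAt ℝ g u) :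
    pd i (fun v => f v - g v) u = pd i f u - pd i g u := by
  unfold pd
  rw [fderiv_fun_sub hf hg]; rfl

lemma pd_mul {N : ℕ} (i : Fin N) {f g : (Fin N → ℝ) → ℝ} {u : Fin N → ℝ}
    (hf : DifferentiableAt ℝ f u) (hg : DifferentiableAt ℝ g u) :
    pd i (fun v => f v * g v) u = pd i f u * g u + f u * pd i g u := by
  unfold pd
  rw [fderiv_fun_mul hf hg]
  simp [ContinuousLinearMap.add_apply, ContinuousLinearMap.smul_apply]
  ring

lemma pd_sum {N : ℕ} (i : Fin N) {α : Type*} (s : Finset α) (f : α → (Fin N → ℝ) → ℝ)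
    {u : Fin N → ℝ} (hf : ∀ a ∈ s, DifferentiableAt ℝ (f a) u) :
    pd i (fun v => ∑ a ∈ s, f a v) u = ∑ a ∈ s, pd i (f a) u := by
  unfold pd
  rw [fderiv_fun_sum hf]
  simp


lemma sum_factor {ι κ : Type*} [Fintype ι] [Fintype κ] (f : ι → ℝ) (g : κ → ℝ) :
    ∑ a, ∑ b, f a * g b = (∑ a, f a) * (∑ b, g b) := by
  rw [Finset.sum_mul_sum]

lemma swap_factor {ι κ : Type*} [Fintype ι] [Fintype κ]
    (D : ι → ℝ) (P : ι → κ → ℝ) (Q : κ → ℝ) :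
    ∑ c, D c * ∑ b, P c b * Q b = ∑ b, (∑ c, D c * P c b) * Q b := by
  simp_rw [Finset.mul_sum, Finset.sum_mul]
  rw [Finset.sum_comm]
  exact Finset.sum_congr rfl fun b _ => Finset.sum_congr rfl fun c _ => by ring

theorem transformed_lame_coefficients
    {N M : ℕ}
    (β : Fin N → Fin N → (Fin N → ℝ) → ℝ)
    (H : Fin N → (Fin N → ℝ) → ℝ)
    (ξ : Fin N → (Fin N → ℝ) → Fin M → ℝ)
    (ξs : Fin N → (Fin N → ℝ) → Fin M → ℝ)
    (Ω Ωinv : (Fin N → ℝ) → Fin M → Fin M → ℝ)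
    (ΩξH : (Fin N → ℝ) → Fin M → ℝ)
    (βh : Fin N → Fin N → (Fin N → ℝ) → ℝ)
    (Hh : Fin N → (Fin N → ℝ) → ℝ)
    (hβ : ∀ i j, i ≠ j → ContDiff ℝ (⊤ : ℕ∞) (β i j))
    (hH : ∀ i, ContDiff ℝ (⊤ : ℕ∞) (H i))
    (hξ : ∀ i a, ContDiff ℝ (⊤ : ℕ∞) (fun u => ξ i u a))
    (hξssm : ∀ i a, ContDiff ℝ (⊤ : ℕ∞) (fun u => ξs i u a))
    (hΩsm : ∀ a b, ContDiff ℝ (⊤ : ℕ∞) (fun u => Ω u a b))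
    (hΩinvsm : ∀ a b, ContDiff ℝ (⊤ : ℕ∞) (fun u => Ωinv u a b))
    (hΩξHsm : ∀ a, ContDiff ℝ (⊤ : ℕ∞) (fun u => ΩξH u a))
    (hDarboux : ∀ i j k, i ≠ j → j ≠ k → i ≠ k → ∀ u : Fin N → ℝ,
      pd k (β i j) u = β i k u * β k j u)
    (hHsys : ∀ i j, i ≠ j → ∀ u : Fin N → ℝ,
      pd i (H j) u = β i j u * H i u)
    (hdirect : ∀ i j, i ≠ j → ∀ (u : Fin N → ℝ) (a : Fin M),
      pd i (fun v => ξ j v a) u = β j i u * ξ i u a)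
    (hadjoint : ∀ i j, i ≠ j → ∀ (u : Fin N → ℝ) (a : Fin M),
      pd i (fun v => ξs j v a) u = β i j u * ξs i u a)
    (hΩ : ∀ i (u : Fin N → ℝ) (a b : Fin M),
      pd i (fun v => Ω v a b) u = ξ i u a * ξs i u b)
    (hΩξH : ∀ i (u : Fin N → ℝ) (a : Fin M),
      pd i (fun v => ΩξH v a) u = ξ i u a * H i u)
    (hinv₁ : ∀ (u : Fin N → ℝ) (a b : Fin M),
      ∑ c, Ω u a c * Ωinv u c b = if a = b then 1 else 0)
    (hinv₂ : ∀ (u : Fin N → ℝ) (a b : Fin M),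
      ∑ c, Ωinv u a c * Ω u c b = if a = b then 1 else 0)
    (hβh : ∀ i j (u : Fin N → ℝ),
      βh i j u = β i j u - ∑ a, ∑ b, ξs j u a * Ωinv u a b * ξ i u b)
    (hHh : ∀ i (u : Fin N → ℝ),
      Hh i u = H i u - ∑ a, ∑ b, ξs i u a * Ωinv u a b * ΩξH u b) :
    ∀ i j, i ≠ j → ∀ u : Fin N → ℝ,
      pd i (fun v => Hh j v) u = βh i j u * Hh i u := by
  intro i j hij u
  have dξ : ∀ (k : Fin N) (a : Fin M), DifferentiableAt ℝ (fun v => ξ k v a) u :=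
    fun k a => ((hξ k a).differentiable (by simp)).differentiableAt
  have dξs : ∀ (k : Fin N) (a : Fin M), DifferentiableAt ℝ (fun v => ξs k v a) u :=
    fun k a => ((hξssm k a).differentiable (by simp)).differentiableAt
  have dΩ : ∀ a b, DifferentiableAt ℝ (fun v => Ω v a b) u :=
    fun a b => ((hΩsm a b).differentiable (by simp)).differentiableAt
  have dΩinv : ∀ a b, DifferentiableAt ℝ (fun v => Ωinv v a b) u :=
    fun a b => ((hΩinvsm a b).differentiable (by simp)).differentiableAt
  have dΩξH : ∀ a, DifferentiableAt ℝ (fun v => ΩξH v a) u :=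
    fun a => ((hΩξHsm a).differentiable (by simp)).differentiableAt
  have dH : ∀ k, DifferentiableAt ℝ (H k) u :=
    fun k => ((hH k).differentiable (by simp)).differentiableAt
  -- derivative of the inverse matrix
  set D : Fin M → Fin M → ℝ := fun a b => pd i (fun v => Ωinv v a b) u with hDdef
  have key : ∀ a b, (∑ c, D a c * Ω u c b) = - ∑ c, Ωinv u a c * (ξ i u c * ξs i u b) := by
    intro a b
    have h1 : (fun v => ∑ c, Ωinv v a c * Ω v c b) = (fun _ => if a = b then (1:ℝ) else 0) :=
      funext fun v => hinv₂ v a b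
    have h2 : pd i (fun v => ∑ c, Ωinv v a c * Ω v c b) u = 0 := by
      rw [h1, pd_const]
    rw [pd_sum i Finset.univ (fun c v => Ωinv v a c * Ω v c b)
      (fun c _ => (dΩinv a c).mul (dΩ c b))] at h2
    have h3 : ∀ c : Fin M, pd i (fun v => Ωinv v a c * Ω v c b) u
        = D a c * Ω u c b + Ωinv u a c * (ξ i u c * ξs i u b) := by
      intro c
      rw [pd_mul i (dΩinv a c) (dΩ c b), hΩ i u c b]
    rw [Finset.sum_congr rfl fun c _ => h3 c, Finset.sum_add_distrib] at h2
    linarith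
  have pdΩinv : ∀ a e, D a e
      = -((∑ c, Ωinv u a c * ξ i u c) * (∑ d, ξs i u d * Ωinv u d e)) := by
    intro a e
    have step1 : D a e = ∑ c, D a c * (if c = e then (1:ℝ) else 0) := by simp
    have step2 : ∑ c, D a c * (if c = e then (1:ℝ) else 0)
        = ∑ c, D a c * ∑ b, Ω u c b * Ωinv u b e :=
      Finset.sum_congr rfl fun c _ => by rw [hinv₁ u c e]
    have step3 : ∑ b, (∑ c, D a c * Ω u c b) * Ωinv u b e
        = ∑ b, (-∑ c, Ωinv u a c * (ξ i u c * ξs i u b)) * Ωinv u b e :=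
      Finset.sum_congr rfl fun b _ => by rw [key a b]
    rw [step1, step2,
      swap_factor (fun c => D a c) (fun c b => Ω u c b) (fun b => Ωinv u b e), step3]
    have this1 : ∀ b, (-∑ c, Ωinv u a c * (ξ i u c * ξs i u b)) * Ωinv u b e
        = -∑ c, (ξs i u b * Ωinv u b e) * (Ωinv u a c * ξ i u c) := by
      intro b
      rw [neg_mul, Finset.sum_mul]
      exact congrArg Neg.neg (Finset.sum_congr rfl fun c _ => by ring)
    have this2 : ∑ b, (-∑ c, Ωinv u a c * (ξ i u c * ξs i u b)) * Ωinv u b e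
        = ∑ b, -∑ c, (ξs i u b * Ωinv u b e) * (Ωinv u a c * ξ i u c) :=
      Finset.sum_congr rfl fun b _ => this1 b
    rw [this2, Finset.sum_neg_distrib,
      sum_factor (fun b => ξs i u b * Ωinv u b e) (fun c => Ωinv u a c * ξ i u c)]
    ring
  -- the two scalar quantities
  set SP : ℝ := ∑ a, ∑ b, ξs j u a * Ωinv u a b * ξ i u b with hSP
  set SA : ℝ := ∑ a, ∑ b, ξs i u a * Ωinv u a b * ΩξH u b with hSA
  -- compute the derivative of Hh j
  have hfun : Hh j = fun v => H j v - ∑ a, ∑ b, ξs j v a * Ωinv v a b * ΩξH v b :=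
    funext (hHh j)
  have dterm : ∀ (a b : Fin M),
      DifferentiableAt ℝ (fun v => ξs j v a * Ωinv v a b * ΩξH v b) u :=
    fun a b => ((dξs j a).mul (dΩinv a b)).mul (dΩξH b)
  have dsum : ∀ a : Fin M,
      DifferentiableAt ℝ (fun v => ∑ b, ξs j v a * Ωinv v a b * ΩξH v b) u :=
    fun a => DifferentiableAt.fun_sum (fun b _ => dterm a b)
  have pdterm : ∀ (a b : Fin M),
      pd i (fun v => ξs j v a * Ωinv v a b * ΩξH v b) u
        = (β i j u * ξs i u a) * Ωinv u a b * ΩξH u b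
          + ξs j u a * D a b * ΩξH u b
          + ξs j u a * Ωinv u a b * (ξ i u b * H i u) := by
    intro a b
    rw [pd_mul i ((dξs j a).fun_mul (dΩinv a b)) (dΩξH b),
      pd_mul i (dξs j a) (dΩinv a b), hadjoint i j hij u a, hΩξH i u b]
    ring
  have main : pd i (fun v => Hh j v) u
      = β i j u * H i u
        - ∑ a, ∑ b, ((β i j u * ξs i u a) * Ωinv u a b * ΩξH u b
            + ξs j u a * D a b * ΩξH u b
            + ξs j u a * Ωinv u a b * (ξ i u b * H i u)) := by
    have : (fun v => Hh j v) = fun v => H j v - ∑ a, ∑ b, ξs j v a * Ωinv v a b * ΩξH v b := by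
      funext v; exact hHh j v
    rw [this, pd_sub i (dH j) (DifferentiableAt.fun_sum fun a _ => dsum a), hHsys i j hij u,
      pd_sum i Finset.univ _ (fun a _ => dsum a)]
    congr 1
    exact Finset.sum_congr rfl fun a _ => by
      rw [pd_sum i Finset.univ _ (fun b _ => dterm a b)]
      exact Finset.sum_congr rfl fun b _ => pdterm a b
  -- now the algebra
  rw [main, hβh, hHh, ← hSP, ← hSA]
  have piece1 : ∑ a, ∑ b, (β i j u * ξs i u a) * Ωinv u a b * ΩξH u b = β i j u * SA := by
    rw [hSA, Finset.mul_sum]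
    refine Finset.sum_congr rfl fun a _ => ?_
    rw [Finset.mul_sum]
    exact Finset.sum_congr rfl fun b _ => by ring
  have piece3 : ∑ a, ∑ b, ξs j u a * Ωinv u a b * (ξ i u b * H i u) = SP * H i u := by
    rw [hSP, Finset.sum_mul]
    refine Finset.sum_congr rfl fun a _ => ?_
    rw [Finset.sum_mul]
    exact Finset.sum_congr rfl fun b _ => by ring
  have hSPfac : ∑ a, ξs j u a * ∑ c, Ωinv u a c * ξ i u c = SP := by
    rw [hSP]
    refine Finset.sum_congr rfl fun a _ => ?_
    rw [Finset.mul_sum]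
    exact Finset.sum_congr rfl fun c _ => by ring
  have hSAfac : ∑ b, (∑ d, ξs i u d * Ωinv u d b) * ΩξH u b = SA := by
    rw [hSA, Finset.sum_comm]
    refine Finset.sum_congr rfl fun b _ => ?_
    rw [Finset.sum_mul]
  have piece2 : ∑ a, ∑ b, ξs j u a * D a b * ΩξH u b = -(SP * SA) := by
    have e1 : ∀ (a b : Fin M), ξs j u a * D a b * ΩξH u b
        = -((ξs j u a * ∑ c, Ωinv u a c * ξ i u c)
            * ((∑ d, ξs i u d * Ωinv u d b) * ΩξH u b)) := by
      intro a b; rw [pdΩinv a b]; ring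
    calc ∑ a, ∑ b, ξs j u a * D a b * ΩξH u b
        = ∑ a, ∑ b, -((ξs j u a * ∑ c, Ωinv u a c * ξ i u c)
            * ((∑ d, ξs i u d * Ωinv u d b) * ΩξH u b)) :=
          Finset.sum_congr rfl fun a _ => Finset.sum_congr rfl fun b _ => e1 a b
      _ = -∑ a, ∑ b, (ξs j u a * ∑ c, Ωinv u a c * ξ i u c)
            * ((∑ d, ξs i u d * Ωinv u d b) * ΩξH u b) := by
          simp [Finset.sum_neg_distrib]
      _ = -((∑ a, ξs j u a * ∑ c, Ωinv u a c * ξ i u c)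
            * ∑ b, (∑ d, ξs i u d * Ωinv u d b) * ΩξH u b) := by rw [sum_factor]
      _ = -(SP * SA) := by rw [hSPfac, hSAfac]
  have split : ∑ a, ∑ b, ((β i j u * ξs i u a) * Ωinv u a b * ΩξH u b
      + ξs j u a * D a b * ΩξH u b + ξs j u a * Ωinv u a b * (ξ i u b * H i u))
      = (∑ a, ∑ b, (β i j u * ξs i u a) * Ωinv u a b * ΩξH u b)
        + (∑ a, ∑ b, ξs j u a * D a b * ΩξH u b)
        + (∑ a, ∑ b, ξs j u a * Ωinv u a b * (ξ i u b * H i u)) := by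
    simp_rw [Finset.sum_add_distrib]
  rw [split, piece1, piece2, piece3]
  ring
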